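/- For every integer d ≥ 1, the two-sided bound √2/√d < Γ(d/2) / Γ(d/2 + 1/2) < √2 · √(d+2) / d holds; in particular, √(d/2) < Γ(d/2 + 1) / Γ(d/2 + 1/2) < √((d+2)/2). -/
import Mathlib


open Real

lemma gamma_sq_le (x : ℝ) (hx : 0 < x) :
    Real.Gamma (x + 1/2) ^ 2 ≤ Real.Gamma x * Real.Gamma (x + 1) := by
  have h := Real.convexOn_log_Gamma.2 (Set.mem_Ioi.2 hx)
    (Set.mem_Ioi.2 (show (0:ℝ) < x + 1 by linarith))
    (by norm_num : (0:ℝ) ≤ 1/2) (by norm_num : (0:ℝ) ≤ 1/2) (by norm_num)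
  simp only [smul_eq_mul, Function.comp_apply] at h
  rw [show (1:ℝ)/2 * x + 1/2 * (x+1) = x + 1/2 by ring] at h
  have p1 := Real.Gamma_pos_of_pos hx
  have p2 := Real.Gamma_pos_of_pos (show (0:ℝ) < x+1 by linarith)
  have p3 := Real.Gamma_pos_of_pos (show (0:ℝ) < x+1/2 by linarith)
  have h2 : Real.log (Real.Gamma (x+1/2) ^ 2) ≤ Real.log (Real.Gamma x * Real.Gamma (x+1)) := by
    rw [Real.log_pow, Real.log_mul p1.ne' p2.ne']
    push_cast; linarith
  exact (Real.log_le_log_iff (by positivity) (by positivity)).mp h2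

/-- For every integer `d ≥ 1`,
`√2/√d < Γ(d/2)/Γ(d/2+1/2) < √2 √(d+2)/d`, and in particular
`√(d/2) < Γ(d/2+1)/Γ(d/2+1/2) < √((d+2)/2)`. -/
theorem gamma_ratio_bounds (d : ℕ) (hd : 1 ≤ d) :
    (Real.sqrt 2 / Real.sqrt d <
        Real.Gamma ((d : ℝ) / 2) / Real.Gamma ((d : ℝ) / 2 + 1 / 2) ∧
      Real.Gamma ((d : ℝ) / 2) / Real.Gamma ((d : ℝ) / 2 + 1 / 2) <
        Real.sqrt 2 * Real.sqrt ((d : ℝ) + 2) / d) ∧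
    (Real.sqrt ((d : ℝ) / 2) <
        Real.Gamma ((d : ℝ) / 2 + 1) / Real.Gamma ((d : ℝ) / 2 + 1 / 2) ∧
      Real.Gamma ((d : ℝ) / 2 + 1) / Real.Gamma ((d : ℝ) / 2 + 1 / 2) <
        Real.sqrt (((d : ℝ) + 2) / 2)) := by
  set D : ℝ := (d : ℝ) with hD_def
  have hD : 1 ≤ D := by rw [hD_def]; exact_mod_cast hd
  have hD0 : 0 < D := by linarith
  have hx : 0 < D / 2 := by linarith
  set a : ℝ := Real.Gamma (D / 2) with ha_def
  set b : ℝ := Real.Gamma (D / 2 + 1 / 2) with hb_def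
  have ha : 0 < a := Real.Gamma_pos_of_pos hx
  have hb : 0 < b := Real.Gamma_pos_of_pos (by linarith)
  have hG1 : Real.Gamma (D / 2 + 1) = D / 2 * a := Real.Gamma_add_one hx.ne'
  have hG2 : Real.Gamma (D / 2 + 1 / 2 + 1) = (D / 2 + 1 / 2) * b :=
    Real.Gamma_add_one (by positivity)
  have hG3 : Real.Gamma (D / 2 + 1 + 1) = (D / 2 + 1) * (D / 2 * a) := by
    rw [Real.Gamma_add_one (by positivity), hG1]
  have I2raw := gamma_sq_le (D / 2 + 1 / 2) (by linarith)
  rw [show D / 2 + 1 / 2 + 1 / 2 = D / 2 + 1 by ring, hG1, hG2] at I2raw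
  have I3raw := gamma_sq_le (D / 2 + 1) (by linarith)
  rw [show D / 2 + 1 + 1 / 2 = D / 2 + 1 / 2 + 1 by ring, hG2, hG1, hG3] at I3raw
  -- I2raw : (D/2 * a)^2 ≤ b * ((D/2+1/2) * b)
  -- I3raw : ((D/2+1/2) * b)^2 ≤ D/2 * a * ((D/2+1) * (D/2 * a))
  have core : 2 * b ^ 2 < D * a ^ 2 := by
    nlinarith [I3raw, mul_pos hD0 (show (0:ℝ) < D + 2 by linarith), sq_nonneg b, hb, ha]
  refine ⟨⟨?_, ?_⟩, ?_, ?_⟩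
  · rw [show Real.sqrt 2 / Real.sqrt D = Real.sqrt (2 / D) from
      (Real.sqrt_div (by norm_num) D).symm,
      Real.sqrt_lt' (by positivity), div_pow, div_lt_div_iff₀ hD0 (by positivity)]
    nlinarith [core]
  · rw [show Real.sqrt 2 * Real.sqrt (D + 2) = Real.sqrt (2 * (D + 2)) from
      (Real.sqrt_mul (by norm_num) _).symm,
      lt_div_iff₀ hD0, Real.lt_sqrt (by positivity), div_mul_eq_mul_div, div_pow,
      div_lt_iff₀ (by positivity)]
    nlinarith [I2raw]
  · rw [hG1, Real.sqrt_lt' (by positivity), div_pow, lt_div_iff₀ (by positivity)]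
    nlinarith [core]
  · rw [hG1, Real.lt_sqrt (by positivity), div_pow, div_lt_iff₀ (by positivity)]
    nlinarith [I2raw]
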